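/- Suppose λ and μ are k-empty partitions with the same e-core and the same e-weight. Then 𝔏_k(λ) + 𝔏_{e-1-k}(λ') = 𝔏_k(μ) + 𝔏_{e-1-k}(μ'); in particular 𝔏_k(λ) = 𝔏_k(μ) if and only if 𝔏_{e-1-k}(λ') = 𝔏_{e-1-k}(μ'). -/
import Mathlib


open scoped BigOperators

def IsPartition (f : ℕ → ℕ) : Prop :=
  (∀ ⦃i j : ℕ⦄, i ≤ j → f j ≤ f i) ∧ ∃ N : ℕ, ∀ i, N ≤ i → f i = 0

noncomputable def conj (f : ℕ → ℕ) (i : ℕ) : ℕ := Nat.card {j : ℕ // i + 1 ≤ f j}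

def betaSet (f : ℕ → ℕ) (r : ℕ) : Multiset ℕ :=
  (Multiset.range r).map fun i => f i + (r - 1 - i)

/-- e-extension of a multiset: z gets multiplicity |B ∩ {z, z+e, z+2e, …}|. -/
def eExt (e : ℕ) (B : Multiset ℕ) : Multiset ℕ :=
  B.bind fun b => (Multiset.range (b / e + 1)).map fun j => b - j * e

def runnerCount (e d : ℕ) (B : Multiset ℕ) : ℕ :=
  Multiset.card (B.filter fun b => b % e = d)

/-- Beta-multiset of the e-core: slide all beads up their runners. -/
def coreBeta (e : ℕ) (B : Multiset ℕ) : Multiset ℕ :=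
  (Multiset.range e).bind fun j =>
    (Multiset.range (runnerCount e j B)).map fun i => j + i * e

/-- Weight multiset 𝔚: records the start of each single-step slide; equivalently
determined by 𝔛 = 𝔛(core) ⊔ 𝔚. -/
def weightMS (e : ℕ) (B : Multiset ℕ) : Multiset ℕ :=
  eExt e B - eExt e (coreBeta e B)

def eWeight (e : ℕ) (B : Multiset ℕ) : ℕ := Multiset.card (weightMS e B)

def DomMS (I J : Multiset ℕ) : Prop := Multiset.Rel (fun a b => b ≤ a) I J

/-- refined dominance order: same e-core and 𝔛^e_r(g) ⪰ 𝔛^e_r(f). -/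
def Dominates (e r : ℕ) (g f : ℕ → ℕ) : Prop :=
  coreBeta e (betaSet g r) = coreBeta e (betaSet f r) ∧
    DomMS (eExt e (betaSet g r)) (eExt e (betaSet f r))
/-- k-empty: all beads on runner d = (r+k) mod e are as high as possible. -/
def KEmpty (e k r : ℕ) (f : ℕ → ℕ) : Prop :=
  ∀ b ∈ betaSet f r, b % e = (r + k) % e →
    b < (r + k) % e + runnerCount e ((r + k) % e) (betaSet f r) * e

/-- 𝔏_k(λ): number of elements (with multiplicity) of 𝔛^e_r(λ) greater than d + c·e. -/
def Lk (e k r : ℕ) (f : ℕ → ℕ) : ℕ :=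
  Multiset.card <| (eExt e (betaSet f r)).filter fun x =>
    (r + k) % e + runnerCount e ((r + k) % e) (betaSet f r) * e < x

lemma my_filter_bind {α β : Type*} (s : Multiset α) (f : α → Multiset β) (p : β → Prop)
    [DecidablePred p] : (s.bind f).filter p = s.bind fun a => (f a).filter p := by
  induction s using Multiset.induction_on with
  | empty => simp
  | cons a s ih => simp [Multiset.cons_bind, Multiset.filter_add, ih]

lemma card_filter_lt_range (n q : ℕ) :
    Multiset.card ((Multiset.range n).filter (· < q)) = min q n := by
  have : (Multiset.range n).filter (· < q) = ((Finset.range n).filter (· < q)).val := rfl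
  rw [this]
  have : (Finset.range n).filter (· < q) = Finset.range (min q n) := by
    ext x; simp [Finset.mem_filter, Finset.mem_range]; omega
  rw [this]; simp

lemma lt_ceil_iff {e : ℕ} (he : 1 ≤ e) (j x : ℕ) : j * e < x ↔ j < (x + (e - 1)) / e := by
  constructor
  · intro h
    have h2 : j + 1 ≤ (x + (e-1)) / e := by
      rw [Nat.le_div_iff_mul_le he, add_one_mul]
      omega
    omega
  · intro h
    have h2 : j + 1 ≤ (x + (e-1)) / e := by omega
    rw [Nat.le_div_iff_mul_le he, add_one_mul] at h2
    omega

lemma chain_card {e : ℕ} (he : 1 ≤ e) (t b : ℕ) :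
    Multiset.card ((((Multiset.range (b / e + 1)).map fun j => b - j * e)).filter (t < ·))
      = (b - t + (e - 1)) / e := by
  set q := (b - t + (e - 1)) / e with hq
  rw [Multiset.filter_map, Multiset.card_map]
  have hcong : (Multiset.range (b / e + 1)).filter ((t < ·) ∘ fun j => b - j * e)
      = (Multiset.range (b / e + 1)).filter (· < q) := by
    apply Multiset.filter_congr
    intro j hj
    rw [Multiset.mem_range] at hj
    have hje : j * e ≤ b := by
      calc j * e ≤ (b / e) * e := Nat.mul_le_mul_right e (by omega)
      _ ≤ b := Nat.div_mul_le_self b e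
    simp only [Function.comp]
    constructor
    · intro h
      rw [← lt_ceil_iff he]; omega
    · intro h
      rw [← lt_ceil_iff he] at h; omega
  rw [hcong, card_filter_lt_range]
  have hqle : q ≤ b / e + 1 := by
    have h1 : b - t + (e - 1) ≤ b + e := by omega
    have h2 : q ≤ (b + e) / e := by
      rw [hq]; exact Nat.div_le_div_right h1
    rw [Nat.add_div_right b he] at h2
    exact h2
  omega

lemma card_filter_eExt {e : ℕ} (he : 1 ≤ e) (t : ℕ) (B : Multiset ℕ) :
    Multiset.card ((eExt e B).filter (t < ·)) = (B.map fun b => (b - t + (e - 1)) / e).sum := by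
  rw [eExt, my_filter_bind, Multiset.card_bind]
  congr 1
  apply Multiset.map_congr rfl
  intro b _
  exact chain_card he t b

lemma Lk_eq {e : ℕ} (he : 1 ≤ e) (k r : ℕ) (f : ℕ → ℕ) :
    Lk e k r f = ((betaSet f r).map fun b =>
      (b - ((r + k) % e + runnerCount e ((r + k) % e) (betaSet f r) * e) + (e - 1)) / e).sum := by
  rw [Lk]
  exact card_filter_eExt he _ _

lemma betaSet_card (f : ℕ → ℕ) (r : ℕ) : Multiset.card (betaSet f r) = r := by
  simp [betaSet]

lemma mem_betaSet {f : ℕ → ℕ} {r b : ℕ} :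
    b ∈ betaSet f r ↔ ∃ i, i < r ∧ b = f i + (r - 1 - i) := by
  simp [betaSet, Multiset.mem_map, Multiset.mem_range, eq_comm]

lemma betaSet_nodup {f : ℕ → ℕ} (hf : IsPartition f) (r : ℕ) : (betaSet f r).Nodup := by
  apply Multiset.Nodup.map_on _ (Multiset.nodup_range r)
  intro i hi j hj hij
  rw [Multiset.mem_range] at hi hj
  by_contra hne
  rcases Nat.lt_or_ge i j with h | h
  · have := hf.1 (le_of_lt h); omega
  · have hji : j < i := by omega
    have := hf.1 (le_of_lt hji); omega

lemma mem_betaSet_le {f : ℕ → ℕ} (hf : IsPartition f) {r b : ℕ} (hb : b ∈ betaSet f r) :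
    b ≤ f 0 + (r - 1) := by
  rw [mem_betaSet] at hb
  obtain ⟨i, hi, rfl⟩ := hb
  have := hf.1 (Nat.zero_le i)
  omega

lemma conj_eq_card {f : ℕ → ℕ} (M m : ℕ) (hM : ∀ i, M ≤ i → f i = 0) :
    conj f m = ((Finset.range M).filter fun i => m + 1 ≤ f i).card := by
  rw [conj]
  have hset : {j : ℕ | m + 1 ≤ f j} = ↑((Finset.range M).filter fun i => m + 1 ≤ f i) := by
    ext j
    simp only [Set.mem_setOf_eq, Finset.coe_filter, Finset.mem_range, Set.mem_setOf_eq]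
    constructor
    · intro h
      refine ⟨?_, h⟩
      by_contra hj
      have := hM j (by omega)
      omega
    · tauto
  calc Nat.card {j : ℕ // m + 1 ≤ f j} = Nat.card {j : ℕ | m + 1 ≤ f j} := rfl
  _ = ({j : ℕ | m + 1 ≤ f j} : Set ℕ).ncard := Nat.card_coe_set_eq _
  _ = _ := by rw [hset, Set.ncard_coe_finset]

lemma f_eq_zero {f : ℕ → ℕ} (hf : IsPartition f) {r : ℕ} (hr : conj f 0 ≤ r) :
    ∀ i, r ≤ i → f i = 0 := by
  intro i hi
  by_contra hfi
  obtain ⟨N, hN⟩ := hf.2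
  have hle : conj f 0 = ((Finset.range (max N (i+1))).filter fun j => 0 + 1 ≤ f j).card :=
    conj_eq_card _ 0 (fun j hj => hN j (by omega))
  have hsub : Finset.range (i+1) ⊆ (Finset.range (max N (i+1))).filter fun j => 0 + 1 ≤ f j := by
    intro j hj
    rw [Finset.mem_range] at hj
    rw [Finset.mem_filter, Finset.mem_range]
    refine ⟨by omega, ?_⟩
    have := hf.1 (show j ≤ i by omega)
    omega
  have := Finset.card_le_card hsub
  rw [Finset.card_range] at this
  omega

lemma conj_le_conj_zero {f : ℕ → ℕ} (hf : IsPartition f) (j : ℕ) : conj f j ≤ conj f 0 := by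
  obtain ⟨N, hN⟩ := hf.2
  rw [conj_eq_card N j hN, conj_eq_card N 0 hN]
  apply Finset.card_le_card
  intro x hx
  rw [Finset.mem_filter] at *
  exact ⟨hx.1, by omega⟩

lemma duality {f : ℕ → ℕ} (hf : IsPartition f) {r s : ℕ}
    (hr : conj f 0 ≤ r) (hs : f 0 ≤ s) :
    betaSet f r + (betaSet (conj f) s).map (fun x => r + s - 1 - x)
      = Multiset.range (r + s) := by
  set N := r + s with hN
  have hmem : ∀ y, y < N →
      y ∈ betaSet f r + (betaSet (conj f) s).map (fun x => N - 1 - x) := by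
    intro y hy
    by_cases hyB : y ∈ betaSet f r
    · exact Multiset.mem_add.2 (Or.inl hyB)
    · refine Multiset.mem_add.2 (Or.inr ?_)
      -- construct the conjugate bead
      set t := ((Finset.range r).filter fun i => y < f i + (r - 1 - i)).card with ht
      have htr : t ≤ r := by
        rw [ht]; exact (Finset.card_filter_le _ _).trans (by rw [Finset.card_range])
      have facta : ∀ i, i < t → y < f i + (r - 1 - i) := by
        intro i hit
        by_contra hcon
        have hsub : ((Finset.range r).filter fun i' => y < f i' + (r - 1 - i')) ⊆
            Finset.range i := by
          intro i' hi'
          rw [Finset.mem_filter, Finset.mem_range] at hi'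
          rw [Finset.mem_range]
          by_contra hge
          have hm := hf.1 (show i ≤ i' by omega)
          have : f i' + (r - 1 - i') ≤ f i + (r - 1 - i) := by omega
          omega
        have := Finset.card_le_card hsub
        rw [Finset.card_range] at this
        omega
      have factc : t < r → f t + (r - 1 - t) < y := by
        intro htlt
        have hne : y ≠ f t + (r - 1 - t) := by
          intro h; exact hyB (mem_betaSet.2 ⟨t, htlt, h⟩)
        by_contra hcon
        have hlt : y < f t + (r - 1 - t) := by omega
        have hsub : Finset.range (t + 1) ⊆
            (Finset.range r).filter fun i => y < f i + (r - 1 - i) := by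
          intro i hi
          rw [Finset.mem_range] at hi
          rw [Finset.mem_filter, Finset.mem_range]
          have hm := hf.1 (show i ≤ t by omega)
          exact ⟨by omega, by omega⟩
        have := Finset.card_le_card hsub
        rw [Finset.card_range] at this
        omega
      have hyt : r ≤ y + t := by
        rcases Nat.lt_or_ge t r with h | h
        · have := factc h; omega
        · omega
      set j := y + t - r with hj
      have hjkey : t < r → f t ≤ j := by
        intro h; have := factc h; omega
      have hfj : 0 < t → j + 1 ≤ f (t - 1) := by
        intro h0
        have := facta (t - 1) (by omega)
        omega
      have hjs : j < s := by
        rcases Nat.eq_or_lt_of_le (Nat.zero_le t) with h0 | h0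
        · -- t = 0
          rcases Nat.lt_or_ge 0 r with hr0 | hr0
          · have := factc (by omega)
            have hf0 := hf.1 (Nat.zero_le 0)
            omega
          · -- r = 0
            omega
        · have h1 := hfj h0
          have h2 := hf.1 (Nat.zero_le (t - 1))
          omega
      have hconj : conj f j = t := by
        rw [conj_eq_card r j (f_eq_zero hf hr)]
        have : ((Finset.range r).filter fun i => j + 1 ≤ f i) = Finset.range t := by
          ext i
          rw [Finset.mem_filter, Finset.mem_range, Finset.mem_range]
          constructor
          · rintro ⟨hir, hfi⟩
            by_contra hge
            have hti : t ≤ i := by omega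
            have htr' : t < r := by omega
            have h1 := hjkey htr'
            have h2 := hf.1 hti
            omega
          · intro hit
            refine ⟨by omega, ?_⟩
            have h1 := hfj (by omega)
            have h2 := hf.1 (show i ≤ t - 1 by omega)
            omega
        rw [this, Finset.card_range]
      rw [Multiset.mem_map]
      refine ⟨conj f j + (s - 1 - j), mem_betaSet.2 ⟨j, hjs, rfl⟩, ?_⟩
      rw [hconj]
      omega
  have hle : Multiset.range N ≤
      betaSet f r + (betaSet (conj f) s).map (fun x => N - 1 - x) := by
    rw [Multiset.le_iff_subset (Multiset.nodup_range N)]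
    intro y hy
    exact hmem y (Multiset.mem_range.1 hy)
  have hcard : Multiset.card (betaSet f r + (betaSet (conj f) s).map (fun x => N - 1 - x))
      ≤ Multiset.card (Multiset.range N) := by
    rw [Multiset.card_add, Multiset.card_map, betaSet_card, betaSet_card, Multiset.card_range]
  exact (Multiset.eq_of_le_of_card_le hle hcard).symm

lemma mod_reflect {e : ℕ} (he : 1 ≤ e) {a b m : ℕ} (h : a + b = m) :
    a % e = (m + e - b % e) % e := by
  have hd := Nat.div_add_mod b e
  have hblt : b % e < e := Nat.mod_lt b he
  have hkey : m + e - b % e = a + e + e * (b / e) := by omega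
  rw [hkey, Nat.add_mul_mod_self_left, Nat.add_mod_right]

lemma mod_reflect_inv {e : ℕ} (he : 1 ≤ e) {m d : ℕ} (hd : d < e) :
    (m + e - (m + e - d) % e) % e = d := by
  have hd2 := Nat.div_add_mod (m + e - d) e
  have hlt : (m + e - d) % e < e := Nat.mod_lt _ he
  have hkey : m + e - (m + e - d) % e = d + e * ((m + e - d) / e) := by omega
  rw [hkey, Nat.add_mul_mod_self_left, Nat.mod_eq_of_lt hd]

lemma range_runner {e : ℕ} (he : 1 ≤ e) {d : ℕ} (hd : d < e) (N : ℕ) :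
    runnerCount e d (Multiset.range N) = (N + e - 1 - d) / e := by
  rw [runnerCount]
  have h1 : (Multiset.range N).filter (fun b => b % e = d)
      = ((Finset.range N).filter (fun b => b % e = d)).val := rfl
  rw [h1]
  have h2 : (Finset.range N).filter (fun b => b % e = d)
      = (Finset.range ((N + e - 1 - d) / e)).image (fun i => d + i * e) := by
    ext x
    rw [Finset.mem_filter, Finset.mem_range, Finset.mem_image]
    constructor
    · rintro ⟨hxN, hxd⟩
      refine ⟨x / e, ?_, ?_⟩
      · rw [Finset.mem_range]
        have hdm := Nat.div_add_mod x e
        have hcomm : x / e * e = e * (x / e) := Nat.mul_comm _ _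
        rw [hxd] at hdm
        have : x / e + 1 ≤ (N + e - 1 - d) / e := by
          rw [Nat.le_div_iff_mul_le he, add_one_mul]
          omega
        omega
      · have hdm := Nat.div_add_mod x e
        have hcomm : x / e * e = e * (x / e) := Nat.mul_comm _ _
        rw [hxd] at hdm
        omega
    · rintro ⟨i, hi, rfl⟩
      rw [Finset.mem_range] at hi
      have : i + 1 ≤ (N + e - 1 - d) / e := hi
      rw [Nat.le_div_iff_mul_le he, add_one_mul] at this
      exact ⟨by omega, by rw [Nat.add_mul_mod_self_right, Nat.mod_eq_of_lt hd]⟩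
  have hinj : Function.Injective (fun i : ℕ => d + i * e) := by
    intro a b hab
    simp only at hab
    have : a * e = b * e := by omega
    exact Nat.eq_of_mul_eq_mul_right he this
  rw [h2]
  have : Multiset.card (Finset.image (fun i => d + i * e) (Finset.range ((N + e - 1 - d) / e))).val
      = (Finset.image (fun i => d + i * e) (Finset.range ((N + e - 1 - d) / e))).card := rfl
  rw [this, Finset.card_image_of_injective _ hinj, Finset.card_range]

lemma coreBeta_filter_card (e : ℕ) (B : Multiset ℕ) (p : ℕ → Prop) [DecidablePred p] :
    Multiset.card ((coreBeta e B).filter p)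
      = ∑ j ∈ Finset.range e,
          Multiset.card ((Multiset.range (runnerCount e j B)).filter fun i => p (j + i * e)) := by
  rw [coreBeta, my_filter_bind, Multiset.card_bind]
  have : ∀ j : ℕ, (Multiset.card ∘ fun a => Multiset.filter p
      ((Multiset.range (runnerCount e a B)).map fun i => a + i * e)) j
      = Multiset.card ((Multiset.range (runnerCount e j B)).filter fun i => p (j + i * e)) := by
    intro j
    simp only [Function.comp]
    rw [Multiset.filter_map, Multiset.card_map]
    rfl
  calc ((Multiset.range e).map (Multiset.card ∘ fun a => Multiset.filter p
      ((Multiset.range (runnerCount e a B)).map fun i => a + i * e))).sum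
      = ((Multiset.range e).map fun j =>
          Multiset.card ((Multiset.range (runnerCount e j B)).filter fun i => p (j + i * e))).sum := by
        apply congrArg
        exact Multiset.map_congr rfl (fun j _ => this j)
  _ = _ := rfl

lemma runnerCount_core {e : ℕ} (he : 1 ≤ e) {j : ℕ} (hj : j < e) (B : Multiset ℕ) :
    runnerCount e j (coreBeta e B) = runnerCount e j B := by
  rw [runnerCount, coreBeta_filter_card]
  have hterm : ∀ j' ∈ Finset.range e,
      Multiset.card ((Multiset.range (runnerCount e j' B)).filter fun i => (j' + i * e) % e = j)
      = if j = j' then runnerCount e j' B else 0 := by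
    intro j' hj'
    rw [Finset.mem_range] at hj'
    have hmod : ∀ i : ℕ, (j' + i * e) % e = j' := by
      intro i
      rw [Nat.add_mul_mod_self_right, Nat.mod_eq_of_lt hj']
    by_cases hjj : j = j'
    · subst hjj
      rw [if_pos rfl]
      have : (Multiset.range (runnerCount e j B)).filter (fun i => (j + i * e) % e = j)
          = Multiset.range (runnerCount e j B) := by
        apply Multiset.filter_eq_self.2
        intro i _
        rw [hmod]
      rw [this, Multiset.card_range]
    · rw [if_neg hjj]
      have : (Multiset.range (runnerCount e j' B)).filter (fun i => (j' + i * e) % e = j)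
          = 0 := by
        apply Multiset.filter_eq_nil.2
        intro i _
        rw [hmod]
        omega
      rw [this]
      rfl
  rw [Finset.sum_congr rfl hterm, Finset.sum_ite_eq]
  rw [if_pos (Finset.mem_range.2 hj)]

lemma sum_mod {e : ℕ} (he : 1 ≤ e) (h : ℕ → ℕ) (s : Multiset ℕ) :
    (s.map fun b => h (b % e)).sum = ∑ j ∈ Finset.range e, runnerCount e j s * h j := by
  induction s using Multiset.induction_on with
  | empty => simp [runnerCount]
  | cons a s ih =>
    rw [Multiset.map_cons, Multiset.sum_cons, ih]
    have hrc : ∀ j, runnerCount e j (a ::ₘ s)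
        = runnerCount e j s + (if a % e = j then 1 else 0) := by
      intro j
      rw [runnerCount, runnerCount, Multiset.filter_cons, Multiset.card_add]
      by_cases hcase : a % e = j
      · simp [hcase, add_comm]
      · simp [hcase]
    have : ∑ j ∈ Finset.range e, runnerCount e j (a ::ₘ s) * h j
        = ∑ j ∈ Finset.range e, (runnerCount e j s * h j
            + (if a % e = j then h j else 0)) := by
      apply Finset.sum_congr rfl
      intro j _
      rw [hrc j]
      by_cases hcase : a % e = j
      · rw [if_pos hcase, if_pos hcase]; ring
      · rw [if_neg hcase, if_neg hcase]; ring
    rw [this, Finset.sum_add_distrib, Finset.sum_ite_eq, if_pos]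
    · ring
    · exact Finset.mem_range.2 (Nat.mod_lt a he)

lemma count_eExt {e : ℕ} (he : 1 ≤ e) (B : Multiset ℕ) (z : ℕ) :
    (eExt e B).count z = Multiset.card (B.filter fun b => z ≤ b ∧ b % e = z % e) := by
  rw [eExt, Multiset.count_bind]
  have hpt : ∀ b : ℕ, Multiset.count z ((Multiset.range (b / e + 1)).map fun j => b - j * e)
      = if z ≤ b ∧ b % e = z % e then 1 else 0 := by
    intro b
    rw [Multiset.count_map]
    have hch : (Multiset.range (b / e + 1)).filter (fun j => z = b - j * e)
        = ((Finset.range (b / e + 1)).filter (fun j => z = b - j * e)).val := rfl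
    by_cases hcond : z ≤ b ∧ b % e = z % e
    · rw [if_pos hcond]
      have hdvd : e ∣ b - z := by
        have : z ≡ b [MOD e] := hcond.2.symm
        exact (Nat.modEq_iff_dvd' hcond.1).1 this
      have heq : (Finset.range (b / e + 1)).filter (fun j => z = b - j * e)
          = {(b - z) / e} := by
        ext j
        rw [Finset.mem_filter, Finset.mem_range, Finset.mem_singleton]
        constructor
        · rintro ⟨hjr, hjz⟩
          have hje : j * e ≤ b := by
            calc j * e ≤ b / e * e := Nat.mul_le_mul_right e (by omega)
            _ ≤ b := Nat.div_mul_le_self b e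
          have hbz : b - z = j * e := by omega
          rw [hbz, Nat.mul_div_cancel _ he]
        · intro hj
          have hc := Nat.div_mul_cancel hdvd
          rw [← hj] at hc
          constructor
          · have : j ≤ b / e := hj ▸ Nat.div_le_div_right (Nat.sub_le b z)
            omega
          · omega
      rw [hch, heq]
      rfl
    · rw [if_neg hcond]
      have heq : (Finset.range (b / e + 1)).filter (fun j => z = b - j * e) = ∅ := by
        ext j
        rw [Finset.mem_filter, Finset.mem_range]
        simp only [Finset.notMem_empty, iff_false]
        rintro ⟨hjr, hjz⟩
        have hje : j * e ≤ b := by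
          calc j * e ≤ b / e * e := Nat.mul_le_mul_right e (by omega)
          _ ≤ b := Nat.div_mul_le_self b e
        have hzb : z ≤ b := by omega
        have hbz : b = z + j * e := by omega
        have : b % e = z % e := by rw [hbz, Nat.add_mul_mod_self_right]
        exact hcond ⟨hzb, this⟩
      rw [hch, heq]
      rfl
  calc (B.map fun b => Multiset.count z ((Multiset.range (b / e + 1)).map fun j => b - j * e)).sum
      = (B.map fun b => if z ≤ b ∧ b % e = z % e then 1 else 0).sum :=
        congrArg _ (Multiset.map_congr rfl fun b _ => hpt b)
  _ = _ := by
      induction B using Multiset.induction_on with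
      | empty => simp
      | cons a B ih =>
        rw [Multiset.map_cons, Multiset.sum_cons, ih, Multiset.filter_cons, Multiset.card_add]
        by_cases hcase : z ≤ a ∧ a % e = z % e
        · simp [hcase, add_comm]
        · simp [hcase]

lemma filter_le_range_card {m : ℕ} (s : Multiset ℕ) (hs : s.Nodup) (j e : ℕ) (he : 1 ≤ e)
    (hall : ∀ b ∈ s, ∃ i, i < m ∧ b = j + i * e) : Multiset.card s ≤ m := by
  have hle : s ≤ (Multiset.range m).map fun i => j + i * e := by
    rw [Multiset.le_iff_subset hs]
    intro b hb
    obtain ⟨i, hi, rfl⟩ := hall b hb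
    exact Multiset.mem_map.2 ⟨i, Multiset.mem_range.2 hi, rfl⟩
  calc Multiset.card s ≤ _ := Multiset.card_le_card hle
  _ = m := by rw [Multiset.card_map, Multiset.card_range]

lemma eExt_core_le {e : ℕ} (he : 1 ≤ e) {B : Multiset ℕ} (hB : B.Nodup) :
    eExt e (coreBeta e B) ≤ eExt e B := by
  rw [Multiset.le_iff_count]
  intro z
  rw [count_eExt he, count_eExt he]
  set j := z % e with hjdef
  set m := z / e with hmdef
  have hjlt : j < e := Nat.mod_lt z he
  have hzdm : e * m + j = z := Nat.div_add_mod z e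
  -- core side
  have hcore : Multiset.card ((coreBeta e B).filter fun b => z ≤ b ∧ b % e = z % e)
      = runnerCount e j B - m := by
    rw [coreBeta_filter_card]
    have hterm : ∀ j' ∈ Finset.range e,
        Multiset.card ((Multiset.range (runnerCount e j' B)).filter
          fun i => z ≤ j' + i * e ∧ (j' + i * e) % e = z % e)
        = if j = j' then runnerCount e j' B - m else 0 := by
      intro j' hj'
      rw [Finset.mem_range] at hj'
      have hmod : ∀ i : ℕ, (j' + i * e) % e = j' := by
        intro i; rw [Nat.add_mul_mod_self_right, Nat.mod_eq_of_lt hj']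
      by_cases hjj : j = j'
      · subst hjj
        rw [if_pos rfl]
        have hfe : ((Multiset.range (runnerCount e j B)).filter
            fun i => z ≤ j + i * e ∧ (j + i * e) % e = z % e)
            = (Multiset.range (runnerCount e j B)).filter fun i => m ≤ i := by
          apply Multiset.filter_congr
          intro i _
          rw [hmod i]
          constructor
          · rintro ⟨h1, _⟩
            by_contra hc
            have h4 : (i + 1) * e ≤ m * e := Nat.mul_le_mul_right e (by omega)
            have h5 : (i + 1) * e = i * e + e := by ring
            have hme : m * e = e * m := Nat.mul_comm m e
            omega
          · intro h1
            have : m * e ≤ i * e := Nat.mul_le_mul_right e h1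
            have hme : m * e = e * m := Nat.mul_comm m e
            exact ⟨by omega, rfl⟩
        rw [hfe]
        have : (Multiset.range (runnerCount e j B)).filter (fun i => m ≤ i)
            = ((Finset.range (runnerCount e j B)).filter (fun i => m ≤ i)).val := rfl
        rw [this]
        have h2 : (Finset.range (runnerCount e j B)).filter (fun i => m ≤ i)
            = Finset.Ico m (runnerCount e j B) := by
          ext x; rw [Finset.mem_filter, Finset.mem_range, Finset.mem_Ico]; omega
        rw [h2]
        have : Multiset.card (Finset.Ico m (runnerCount e j B)).val
            = (Finset.Ico m (runnerCount e j B)).card := rfl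
        rw [this, Nat.card_Ico]
      · rw [if_neg hjj]
        have : ((Multiset.range (runnerCount e j' B)).filter
            fun i => z ≤ j' + i * e ∧ (j' + i * e) % e = z % e) = 0 := by
          apply Multiset.filter_eq_nil.2
          intro i _
          rw [hmod i]
          rintro ⟨_, hc⟩
          exact hjj (by omega)
        rw [this]; rfl
    rw [Finset.sum_congr rfl hterm, Finset.sum_ite_eq, if_pos (Finset.mem_range.2 hjlt)]
  rw [hcore]
  -- B side
  have hsplit := Multiset.filter_add_not (fun b => z ≤ b) (B.filter fun b => b % e = j)
  have hf1 : (B.filter fun b => b % e = j).filter (fun b => z ≤ b)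
      = B.filter fun b => z ≤ b ∧ b % e = j := by
    rw [Multiset.filter_filter]
  have hf2 : (B.filter fun b => b % e = j).filter (fun b => ¬ z ≤ b)
      = B.filter fun b => ¬ z ≤ b ∧ b % e = j := by
    rw [Multiset.filter_filter]
  have hcards : runnerCount e j B
      = Multiset.card (B.filter fun b => z ≤ b ∧ b % e = j)
        + Multiset.card (B.filter fun b => ¬ z ≤ b ∧ b % e = j) := by
    rw [runnerCount, ← hf1, ← hf2, ← Multiset.card_add, hsplit]
  have hsmall : Multiset.card (B.filter fun b => ¬ z ≤ b ∧ b % e = j) ≤ m := by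
    apply filter_le_range_card _ (hB.filter _) j e he
    intro b hb
    rw [Multiset.mem_filter] at hb
    obtain ⟨hbB, hblt, hbmod⟩ := hb
    refine ⟨b / e, ?_, ?_⟩
    · have hbdm := Nat.div_add_mod b e
      have hc2 : e * (b / e) = b / e * e := Nat.mul_comm _ _
      have hc3 : e * m = m * e := Nat.mul_comm _ _
      by_contra hc
      have : m * e ≤ b / e * e := Nat.mul_le_mul_right e (by omega)
      omega
    · have hbdm := Nat.div_add_mod b e
      have hc2 : e * (b / e) = b / e * e := Nat.mul_comm _ _
      omega
  omega

lemma sum_eExt_card {e : ℕ} (he : 1 ≤ e) (s : Multiset ℕ) :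
    e * Multiset.card (eExt e s) + (s.map (· % e)).sum = s.sum + e * Multiset.card s := by
  induction s using Multiset.induction_on with
  | empty => simp [eExt]
  | cons a s ih =>
    have hbind : eExt e (a ::ₘ s)
        = ((Multiset.range (a / e + 1)).map fun j => a - j * e) + eExt e s := by
      rw [eExt, Multiset.cons_bind]; rfl
    rw [hbind, Multiset.card_add, Multiset.card_map, Multiset.card_range,
        Multiset.map_cons, Multiset.sum_cons, Multiset.sum_cons, Multiset.card_cons]
    have h1 := Nat.div_add_mod a e
    have h2 : e * (a / e + 1 + Multiset.card (eExt e s))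
        = e * (a / e) + e + e * Multiset.card (eExt e s) := by ring
    have h3 : e * (Multiset.card s + 1) = e * Multiset.card s + e := by ring
    omega

lemma per_bead {e : ℕ} (he : 1 ≤ e) {T T' N b d : ℕ} (hd : d < e) (hTd : T % e = d)
    (hTT : T + T' = N - 1 + e) (hN : 1 ≤ N) (hb : b ≤ N - 1)
    (hkb : b % e = d → b < T) :
    (e : ℤ) * (((b - T + (e - 1)) / e : ℕ) : ℤ)
      - e * ((((N - 1 - b) - T' + (e - 1)) / e : ℕ) : ℤ)
      = (b : ℤ) - T + (((T + (e - 1) * b) % e : ℕ) : ℤ)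
        + (if b % e = d then (e : ℤ) else 0) := by
  have h5 : (e - 1) * b + b = e * b := by
    have h := Nat.sub_one_mul e b
    have hble : b ≤ e * b := Nat.le_mul_of_pos_left b (by omega)
    omega
  by_cases hbd : b % e = d
  · -- bead on runner d, strictly above threshold position
    have hbT : b < T := hkb hbd
    have hmods : b % e = T % e := by rw [hbd, hTd]
    have hdvd : e ∣ T - b := (Nat.modEq_iff_dvd' (le_of_lt hbT)).1 hmods
    obtain ⟨w, hw⟩ := hdvd
    have hw1 : 1 ≤ w := by
      rcases Nat.eq_zero_or_pos w with h0 | h0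
      · rw [h0] at hw; omega
      · omega
    obtain ⟨w', rfl⟩ : ∃ w', w = w' + 1 := ⟨w - 1, by omega⟩
    have hring : e * (w' + 1) = e * w' + e := by ring
    have hq1 : (b - T + (e - 1)) / e = 0 := by
      have h8 : b - T + (e - 1) = e - 1 := by omega
      rw [h8]; exact Nat.div_eq_of_lt (by omega)
    have hq2 : ((N - 1 - b) - T' + (e - 1)) / e = w' := by
      have h8 : (N - 1 - b) - T' + (e - 1) = e * w' + (e - 1) := by omega
      rw [h8, Nat.mul_add_div (by omega)]
      have : (e - 1) / e = 0 := Nat.div_eq_of_lt (by omega)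
      omega
    have hρ : (T + (e - 1) * b) % e = 0 := by
      have h6 : T + (e - 1) * b = e * (w' + 1 + b) := by
        have h7 : e * (w' + 1 + b) = e * (w' + 1) + e * b := by ring
        omega
      rw [h6, Nat.mul_mod_right]
    rw [hq1, hq2, hρ, if_pos hbd]
    have hTz : (T : ℤ) = b + e * w' + e := by
      have hTn : T = b + (e * w' + e) := by omega
      have := congrArg (fun x : ℕ => (x : ℤ)) hTn
      push_cast at this
      linarith
    push_cast
    linarith
  · -- bead off runner d
    have hne : b % e ≠ T % e := by rw [hTd]; exact hbd
    set ρ := (T + (e - 1) * b) % e with hρdef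
    have hρlt : ρ < e := Nat.mod_lt _ (by omega)
    have hρch : (b + ρ) % e = T % e := by
      rw [hρdef, Nat.add_mod_mod]
      have h6 : b + (T + (e - 1) * b) = T + e * b := by omega
      rw [h6, Nat.add_mul_mod_self_left]
    have hρ0 : ρ ≠ 0 := by
      intro h0
      rw [h0, Nat.add_zero] at hρch
      exact hne hρch
    rw [if_neg hbd]
    rcases Nat.lt_or_ge T b with hbT | hbT'
    · -- b > T
      have hq2 : ((N - 1 - b) - T' + (e - 1)) / e = 0 := by
        have h8 : (N - 1 - b) - T' + (e - 1) = e - 1 := by omega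
        rw [h8]; exact Nat.div_eq_of_lt (by omega)
      have hdvd : e ∣ (b + ρ) - T := (Nat.modEq_iff_dvd' (by omega)).1 hρch.symm
      -- note: modEq_iff_dvd' : a ≤ b → (a ≡ b [MOD n] ↔ n ∣ b - a); here a = T, b = b+ρ
      obtain ⟨a, ha⟩ := hdvd
      have ha1 : 1 ≤ a := by
        rcases Nat.eq_zero_or_pos a with h0 | h0
        · rw [h0] at ha; omega
        · omega
      obtain ⟨a', rfl⟩ : ∃ a', a = a' + 1 := ⟨a - 1, by omega⟩
      have hring : e * (a' + 1) = e * a' + e := by ring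
      have hq1 : (b - T + (e - 1)) / e = a' + 1 := by
        have h8 : b - T + (e - 1) = e * (a' + 1) + (e - 1 - ρ) := by omega
        rw [h8, Nat.mul_add_div (by omega)]
        have : (e - 1 - ρ) / e = 0 := Nat.div_eq_of_lt (by omega)
        omega
      rw [hq1, hq2]
      have hansz : (b : ℤ) + ρ = T + (e * a' + e) := by
        have hn : b + ρ = T + (e * a' + e) := by omega
        exact_mod_cast congrArg (fun x : ℕ => (x : ℤ)) hn
      push_cast
      linarith
    · -- b < T
      have hbT : b < T := by
        rcases Nat.eq_or_lt_of_le hbT' with h0 | h0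
        · exact absurd (by rw [h0]) hne
        · exact h0
      have hq1 : (b - T + (e - 1)) / e = 0 := by
        have h8 : b - T + (e - 1) = e - 1 := by omega
        rw [h8]; exact Nat.div_eq_of_lt (by omega)
      have hρTb : (T - b) % e = ρ := by
        have h7 : T + (e - 1) * b = (T - b) + e * b := by omega
        rw [hρdef, h7, Nat.add_mul_mod_self_left]
      have hdm0 := Nat.div_add_mod (T - b) e
      rw [hρTb] at hdm0
      rcases Nat.eq_zero_or_pos ((T - b) / e) with h0 | h0
      · rw [h0, Nat.mul_zero, Nat.zero_add] at hdm0
        have hq2 : ((N - 1 - b) - T' + (e - 1)) / e = 0 := by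
          have h8 : (N - 1 - b) - T' + (e - 1) = e - 1 := by omega
          rw [h8]; exact Nat.div_eq_of_lt (by omega)
        rw [hq1, hq2]
        have hTn : T = b + ρ := by omega
        have hTz : (T : ℤ) = b + ρ := by exact_mod_cast congrArg (fun x : ℕ => (x : ℤ)) hTn
        push_cast
        linarith
      · obtain ⟨h', hh⟩ : ∃ h'', (T - b) / e = h'' + 1 := ⟨(T - b) / e - 1, by omega⟩
        rw [hh] at hdm0
        have hdm : e * (h' + 1) + ρ = T - b := hdm0
        have hring : e * (h' + 1) = e * h' + e := by ring
        have hq2 : ((N - 1 - b) - T' + (e - 1)) / e = h' + 1 := by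
          have h8 : (N - 1 - b) - T' + (e - 1) = e * h' + (ρ + (e - 1)) := by omega
          rw [h8, Nat.mul_add_div (by omega)]
          have h9 : ρ + (e - 1) = e + (ρ - 1) := by omega
          rw [h9, Nat.add_div_left _ (by omega)]
          have : (ρ - 1) / e = 0 := Nat.div_eq_of_lt (by omega)
          omega
        rw [hq1, hq2]
        have hTn : T = b + (e * h' + e + ρ) := by omega
        have hTz : (T : ℤ) = b + (e * h' + e + ρ) := by
          exact_mod_cast congrArg (fun x : ℕ => (x : ℤ)) hTn
        push_cast
        linarith

lemma sum_map_ite_card (s : Multiset ℕ) (p : ℕ → Prop) [DecidablePred p] (x : ℤ) :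
    (s.map fun a => if p a then x else 0).sum = (Multiset.card (s.filter p) : ℤ) * x := by
  induction s using Multiset.induction_on with
  | empty => simp
  | cons a s ih =>
    rw [Multiset.map_cons, Multiset.sum_cons, ih, Multiset.filter_cons, Multiset.card_add]
    by_cases hpa : p a
    · simp only [if_pos hpa, hpa]
      push_cast
      ring_nf
      simp [add_mul]
      ring
    · simp only [if_neg hpa, hpa]
      simp

def masterRHS (e k r s : ℕ) (C : Multiset ℕ) (w : ℕ) : ℤ :=
  (e : ℤ) * (((Multiset.range (r + s)).map fun x : ℕ =>
      ((((r + s - 1 - x) - ((r + s - 1 + e) - ((r + k) % e + runnerCount e ((r + k) % e) C * e))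
        + (e - 1)) / e : ℕ) : ℤ)).sum)
    + ((C.sum : ℤ) + (e : ℤ) * (w : ℤ))
    - (r : ℤ) * (((r + k) % e + runnerCount e ((r + k) % e) C * e : ℕ) : ℤ)
    + (∑ j ∈ Finset.range e, (runnerCount e j C : ℤ) *
        (((((r + k) % e + runnerCount e ((r + k) % e) C * e) + (e - 1) * j) % e : ℕ) : ℤ))
    + (e : ℤ) * (runnerCount e ((r + k) % e) C : ℤ)

lemma master {e : ℕ} (he : 1 ≤ e) {k r s : ℕ} (hk : k < e) (hr : 1 ≤ r) (hs : 1 ≤ s)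
    {f : ℕ → ℕ} (hf : IsPartition f) (hrf : conj f 0 ≤ r) (hsf : f 0 ≤ s)
    (hkf : KEmpty e k r f) :
    (e : ℤ) * ((Lk e k r f : ℤ) + (Lk e (e - 1 - k) s (conj f) : ℤ))
      = masterRHS e k r s (coreBeta e (betaSet f r)) (eWeight e (betaSet f r)) := by
  rw [masterRHS]
  have hcB : runnerCount e ((r + k) % e) (coreBeta e (betaSet f r))
      = runnerCount e ((r + k) % e) (betaSet f r) :=
    runnerCount_core he (Nat.mod_lt _ (by omega)) _
  rw [hcB]
  set B := betaSet f r with hBdef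
  set d := (r + k) % e with hddef
  set c := runnerCount e d B with hcdef
  set N := r + s with hNdef
  have hd : d < e := hddef ▸ Nat.mod_lt _ (by omega)
  have hN1 : 1 ≤ N := by omega
  have hTd : (d + c * e) % e = d := by
    rw [Nat.add_mul_mod_self_right]; exact Nat.mod_eq_of_lt hd
  set B' := betaSet (conj f) s with hB'def
  have hdual : B + B'.map (fun x => N - 1 - x) = Multiset.range N := duality hf hrf hsf
  have hBle : ∀ b ∈ B, b ≤ N - 1 := by
    intro b hb
    have h1 : b ≤ f 0 + (r - 1) := mem_betaSet_le hf (hBdef ▸ hb)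
    omega
  have hB'le : ∀ b ∈ B', b ≤ N - 1 := by
    intro b hb
    rw [hB'def, mem_betaSet] at hb
    obtain ⟨i, his, hbe⟩ := hb
    have h1 := conj_le_conj_zero hf i
    omega
  set d' := (s + (e - 1 - k)) % e with hd'def
  have hd' : d' < e := hd'def ▸ Nat.mod_lt _ (by omega)
  set c' := runnerCount e d' B' with hc'def
  have hdd' : (N - 1 + e - d) % e = d' := by
    have hdm := Nat.div_add_mod (r + k) e
    rw [← hddef] at hdm
    have h1 : N - 1 + e - d = s + (e - 1 - k) + e * ((r + k) / e) := by omega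
    rw [h1, Nat.add_mul_mod_self_left, hd'def]
  have hrefl : runnerCount e d (B'.map fun x => N - 1 - x) = c' := by
    rw [runnerCount, Multiset.filter_map, Multiset.card_map, hc'def, runnerCount]
    congr 1
    apply Multiset.filter_congr
    intro b hb
    have hble := hB'le b hb
    have hsum : (N - 1 - b) + b = N - 1 := by omega
    simp only [Function.comp]
    constructor
    · intro hmod
      have h2 := mod_reflect he (show b + (N - 1 - b) = N - 1 by omega)
      rw [hmod] at h2
      rw [h2, hdd']
    · intro hmod
      have h2 := mod_reflect he hsum
      rw [hmod, ← hdd'] at h2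
      rw [h2]
      exact mod_reflect_inv he hd
  have hsplitR : runnerCount e d (Multiset.range N) = c + c' := by
    rw [← hdual, runnerCount, Multiset.filter_add, Multiset.card_add]
    rw [← runnerCount, ← runnerCount, hrefl, ← hcdef]
  have hRval := range_runner he hd N
  rw [hRval] at hsplitR
  have hTT : (d + c * e) + (d' + c' * e) = N - 1 + e := by
    have hA := Nat.div_add_mod (N + e - 1 - d) e
    have hAm : (N + e - 1 - d) % e = d' := by
      have h1 : N + e - 1 - d = N - 1 + e - d := by omega
      rw [h1, hdd']
    rw [hAm] at hA
    have h4 : e * ((N + e - 1 - d) / e) = e * (c + c') := by rw [hsplitR]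
    have h5 : e * (c + c') = c * e + c' * e := by ring
    omega
  -- Lk as sums
  have hLk1 : Lk e k r f = (B.map fun b => (b - (d + c * e) + (e - 1)) / e).sum := by
    rw [Lk_eq he k r f, ← hBdef, ← hddef, ← hcdef]
  have hLk2 : Lk e (e - 1 - k) s (conj f)
      = (B'.map fun b => (b - (d' + c' * e) + (e - 1)) / e).sum := by
    rw [Lk_eq he (e - 1 - k) s (conj f), ← hB'def, ← hd'def, ← hc'def]
  -- reflect the conjugate sum
  have hmapB' : (B'.map fun b => (b - (d' + c' * e) + (e - 1)) / e)
      = (B'.map fun x => N - 1 - x).map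
          (fun y => ((N - 1 - y) - (d' + c' * e) + (e - 1)) / e) := by
    rw [Multiset.map_map]
    apply Multiset.map_congr rfl
    intro b hb
    have h1 := hB'le b hb
    simp only [Function.comp]
    have h2 : N - 1 - (N - 1 - b) = b := by omega
    rw [h2]
  have hsum_range : ((Multiset.range N).map
        (fun y => ((N - 1 - y) - (d' + c' * e) + (e - 1)) / e)).sum
      = (B.map (fun y => ((N - 1 - y) - (d' + c' * e) + (e - 1)) / e)).sum
        + ((B'.map fun x => N - 1 - x).map
            (fun y => ((N - 1 - y) - (d' + c' * e) + (e - 1)) / e)).sum := by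
    rw [← hdual, Multiset.map_add, Multiset.sum_add]
  -- cast helper
  have hcast : ∀ (t : Multiset ℕ) (g : ℕ → ℕ),
      (((t.map g).sum : ℕ) : ℤ) = (t.map fun b => ((g b : ℕ) : ℤ)).sum := by
    intro t g
    rw [Nat.cast_multiset_sum, Multiset.map_map]
    rfl
  -- per-bead identity summed over B
  have hE3 : (e : ℤ) * (B.map fun b => (((b - (d + c * e) + (e - 1)) / e : ℕ) : ℤ)).sum
      - (e : ℤ) * (B.map fun b =>
          ((((N - 1 - b) - (d' + c' * e) + (e - 1)) / e : ℕ) : ℤ)).sum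
      = ((B.sum : ℕ) : ℤ) - (Multiset.card B : ℤ) * (((d + c * e : ℕ)) : ℤ)
        + (∑ j ∈ Finset.range e, (runnerCount e j B : ℤ)
            * (((((d + c * e) + (e - 1) * j) % e : ℕ)) : ℤ))
        + (e : ℤ) * (c : ℤ) := by
    rw [← Multiset.sum_map_mul_left, ← Multiset.sum_map_mul_left, ← Multiset.sum_map_sub]
    have hpb : ∀ b ∈ B, (e : ℤ) * (((b - (d + c * e) + (e - 1)) / e : ℕ) : ℤ)
        - (e : ℤ) * ((((N - 1 - b) - (d' + c' * e) + (e - 1)) / e : ℕ) : ℤ)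
        = ((b : ℕ) : ℤ) - (((d + c * e : ℕ)) : ℤ)
          + ((((d + c * e) + (e - 1) * b) % e : ℕ) : ℤ)
          + (if b % e = d then (e : ℤ) else 0) := by
      intro b hb
      exact per_bead he hd hTd hTT hN1 (hBle b hb) (fun hmod => hkf b hb hmod)
    rw [Multiset.map_congr rfl hpb]
    have hsplit : (B.map fun b => ((b : ℕ) : ℤ) - (((d + c * e : ℕ)) : ℤ)
          + ((((d + c * e) + (e - 1) * b) % e : ℕ) : ℤ)
          + (if b % e = d then (e : ℤ) else 0)).sum
        = ((B.map fun b => ((b : ℕ) : ℤ)).sum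
            - (B.map fun _ => (((d + c * e : ℕ)) : ℤ)).sum
            + (B.map fun b => ((((d + c * e) + (e - 1) * b) % e : ℕ) : ℤ)).sum)
            + (B.map fun b => (if b % e = d then (e : ℤ) else 0)).sum := by
      simp only [Multiset.sum_map_add, Multiset.sum_map_sub]
    rw [hsplit]
    have hp1 : (B.map fun b => ((b : ℕ) : ℤ)).sum = ((B.sum : ℕ) : ℤ) := by
      rw [Nat.cast_multiset_sum]
    have hp2 : (B.map fun _ => (((d + c * e : ℕ)) : ℤ)).sum
        = (Multiset.card B : ℤ) * (((d + c * e : ℕ)) : ℤ) := by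
      rw [Multiset.map_const', Multiset.sum_replicate, nsmul_eq_mul]
    have hp3 : (B.map fun b => ((((d + c * e) + (e - 1) * b) % e : ℕ) : ℤ)).sum
        = ∑ j ∈ Finset.range e, (runnerCount e j B : ℤ)
            * (((((d + c * e) + (e - 1) * j) % e : ℕ)) : ℤ) := by
      have hmodρ : ∀ b ∈ B, ((((d + c * e) + (e - 1) * b) % e : ℕ) : ℤ)
          = ((((d + c * e) + (e - 1) * (b % e)) % e : ℕ) : ℤ) := by
        intro b _
        congr 1
        conv_lhs => rw [Nat.add_mod, Nat.mul_mod]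
        conv_rhs => rw [Nat.add_mod, Nat.mul_mod, Nat.mod_mod_of_dvd b (dvd_refl e)]
      rw [Multiset.map_congr rfl hmodρ]
      have hnat : (B.map fun b => (((d + c * e) + (e - 1) * (b % e)) % e : ℕ)).sum
          = ∑ j ∈ Finset.range e, runnerCount e j B * (((d + c * e) + (e - 1) * j) % e) :=
        sum_mod he (fun j => ((d + c * e) + (e - 1) * j) % e) B
      calc (B.map fun b => ((((d + c * e) + (e - 1) * (b % e)) % e : ℕ) : ℤ)).sum
          = (((B.map fun b => (((d + c * e) + (e - 1) * (b % e)) % e : ℕ)).sum : ℕ) : ℤ) := by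
            rw [Nat.cast_multiset_sum, Multiset.map_map]; rfl
      _ = _ := by rw [hnat]; push_cast; rfl
    have hp4 : (B.map fun b => (if b % e = d then (e : ℤ) else 0)).sum
        = (e : ℤ) * (c : ℤ) := by
      rw [sum_map_ite_card]
      rw [hcdef, runnerCount]
      ring
    rw [hp1, hp2, hp3, hp4]
  -- weight relation
  have hwrel : ((B.sum : ℕ) : ℤ)
      = (((coreBeta e B).sum : ℕ) : ℤ) + (e : ℤ) * (eWeight e B : ℤ) := by
    have hle := eExt_core_le he (hBdef ▸ betaSet_nodup hf r)
    have hcardrel : Multiset.card (eExt e B)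
        = Multiset.card (eExt e (coreBeta e B)) + eWeight e B := by
      have h1 : eExt e B - eExt e (coreBeta e B) + eExt e (coreBeta e B) = eExt e B :=
        tsub_add_cancel_of_le hle
      have h2 := congrArg Multiset.card h1
      rw [Multiset.card_add] at h2
      rw [eWeight, weightMS]
      omega
    have h1 := sum_eExt_card he B
    have h2 := sum_eExt_card he (coreBeta e B)
    have hmodsum : (B.map (· % e)).sum = ((coreBeta e B).map (· % e)).sum := by
      have ha : (B.map (· % e)).sum = ∑ j ∈ Finset.range e, runnerCount e j B * j := by
        have := sum_mod he (fun x => x) B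
        simpa using this
      have hb : ((coreBeta e B).map (· % e)).sum
          = ∑ j ∈ Finset.range e, runnerCount e j (coreBeta e B) * j := by
        have := sum_mod he (fun x => x) (coreBeta e B)
        simpa using this
      rw [ha, hb]
      apply Finset.sum_congr rfl
      intro j hj
      rw [runnerCount_core he (Finset.mem_range.1 hj)]
    have hcardBC : Multiset.card B = Multiset.card (coreBeta e B) := by
      have ha : (B.map fun _ => 1).sum = ∑ j ∈ Finset.range e, runnerCount e j B * 1 :=
        sum_mod he (fun _ => 1) B
      have hb : ((coreBeta e B).map fun _ => 1).sum
          = ∑ j ∈ Finset.range e, runnerCount e j (coreBeta e B) * 1 :=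
        sum_mod he (fun _ => 1) (coreBeta e B)
      have hc1 : (B.map fun _ => 1).sum = Multiset.card B := by
        rw [Multiset.map_const', Multiset.sum_replicate, smul_eq_mul, mul_one]
      have hc2 : ((coreBeta e B).map fun _ => 1).sum = Multiset.card (coreBeta e B) := by
        rw [Multiset.map_const', Multiset.sum_replicate, smul_eq_mul, mul_one]
      rw [hc1] at ha
      rw [hc2] at hb
      rw [ha, hb]
      apply Finset.sum_congr rfl
      intro j hj
      rw [runnerCount_core he (Finset.mem_range.1 hj)]
    have h3 : e * Multiset.card (eExt e B)
        = e * Multiset.card (eExt e (coreBeta e B)) + e * eWeight e B := by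
      rw [hcardrel]; ring
    have h4 : e * Multiset.card B = e * Multiset.card (coreBeta e B) := by
      rw [hcardBC]
    have h5 : B.sum = (coreBeta e B).sum + e * eWeight e B := by omega
    rw [h5]; push_cast; ring
  -- final assembly
  have hT' : N - 1 + e - (d + c * e) = d' + c' * e := by omega
  rw [hT', hLk1, hLk2, hmapB']
  have hQ : ((((B'.map fun x => N - 1 - x).map
      (fun y => ((N - 1 - y) - (d' + c' * e) + (e - 1)) / e)).sum : ℕ) : ℤ)
      = ((((Multiset.range N).map
          (fun y => ((N - 1 - y) - (d' + c' * e) + (e - 1)) / e)).sum : ℕ) : ℤ)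
        - (((B.map (fun y => ((N - 1 - y) - (d' + c' * e) + (e - 1)) / e)).sum : ℕ) : ℤ) := by
    rw [hsum_range]; push_cast; ring
  rw [hQ]
  rw [hcast B (fun b => (b - (d + c * e) + (e - 1)) / e),
      hcast (Multiset.range N) (fun y => ((N - 1 - y) - (d' + c' * e) + (e - 1)) / e),
      hcast B (fun y => ((N - 1 - y) - (d' + c' * e) + (e - 1)) / e)]
  have hrcsum : (∑ j ∈ Finset.range e, (runnerCount e j (coreBeta e B) : ℤ)
      * ((((d + c * e) + (e - 1) * j) % e : ℕ) : ℤ))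
      = ∑ j ∈ Finset.range e, (runnerCount e j B : ℤ)
        * ((((d + c * e) + (e - 1) * j) % e : ℕ) : ℤ) := by
    apply Finset.sum_congr rfl
    intro j hj
    rw [runnerCount_core he (Finset.mem_range.1 hj)]
  rw [hrcsum]
  have hcardB : (Multiset.card B : ℤ) = (r : ℤ) := by rw [hBdef, betaSet_card]
  rw [hcardB] at hE3
  linear_combination hE3 + hwrel

/-- for k-empty λ, μ with the same e-core and e-weight,
𝔏_k(λ) + 𝔏_{e-1-k}(λ') = 𝔏_k(μ) + 𝔏_{e-1-k}(μ'); in particular 𝔏_k(λ) = 𝔏_k(μ)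
iff 𝔏_{e-1-k}(λ') = 𝔏_{e-1-k}(μ'). -/
theorem stmt12 (e : ℕ) (he : 2 ≤ e) (k : ℕ) (hk : k < e) (f g : ℕ → ℕ)
    (hf : IsPartition f) (hg : IsPartition g) (r s : ℕ)
    (hrf : conj f 0 ≤ r) (hrg : conj g 0 ≤ r) (hsf : f 0 ≤ s) (hsg : g 0 ≤ s)
    (hcore : coreBeta e (betaSet f r) = coreBeta e (betaSet g r))
    (hw : eWeight e (betaSet f r) = eWeight e (betaSet g r))
    (hkf : KEmpty e k r f) (hkg : KEmpty e k r g) :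
    (Lk e k r f + Lk e (e - 1 - k) s (conj f)
      = Lk e k r g + Lk e (e - 1 - k) s (conj g)) ∧
    (Lk e k r f = Lk e k r g ↔
      Lk e (e - 1 - k) s (conj f) = Lk e (e - 1 - k) s (conj g)) := by
  have he1 : 1 ≤ e := by omega
  by_cases hr0 : r = 0
  · have hfg : f = g := by
      funext i
      rw [f_eq_zero hf hrf i (by omega), f_eq_zero hg hrg i (by omega)]
    rw [hfg]
    exact ⟨rfl, iff_of_true rfl rfl⟩
  by_cases hs0 : s = 0
  · have hfg : f = g := by
      funext i
      have h1 : f i ≤ f 0 := hf.1 (Nat.zero_le i)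
      have h2 : g i ≤ g 0 := hg.1 (Nat.zero_le i)
      omega
    rw [hfg]
    exact ⟨rfl, iff_of_true rfl rfl⟩
  have h1 := master he1 hk (by omega : 1 ≤ r) (by omega : 1 ≤ s) hf hrf hsf hkf
  have h2 := master he1 hk (by omega : 1 ≤ r) (by omega : 1 ≤ s) hg hrg hsg hkg
  rw [hcore, hw] at h1
  have h3 := h1.trans h2.symm
  have he0 : (e : ℤ) ≠ 0 := by
    have : e ≠ 0 := by omega
    exact_mod_cast this
  have h4 := mul_left_cancel₀ he0 h3
  have hsum : Lk e k r f + Lk e (e - 1 - k) s (conj f)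
      = Lk e k r g + Lk e (e - 1 - k) s (conj g) := by exact_mod_cast h4
  exact ⟨hsum, by omega⟩
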